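/- arXiv:1911.04404 — 4 statements merged into one kernel-verified Lean document; each statement's English description precedes it below -/
import Mathlib

section
/- Let L : ℕ → ℕ be given by L(j) = 2^j − 1. For any finite nonempty set J ⊆ ℕ with maximum n, there do not exist natural numbers k_j (j ∈ J) such that Σ_{j∈J} k_j · (2^j − 1) = 2^{n+1} − 1 and Σ_{j∈J} k_j · (2^{j+m} − 1) = 2^{n+m+1} − 1 for some fixed m ≥ 1. -/
/-!
Write `A = ∑ k_j 2^j` and `S = ∑ k_j`. In `ℤ` the two equations read `A - S = 2^(n+1) - 1` and
`2^m A - S = 2^m 2^(n+1) - 1`; since `2^m ≠ 1` they force `A = 2^(n+1)` and `S = 1`.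
But every `j ∈ J` is at most `n`, so `A ≤ S 2^n = 2^n < 2^(n+1)`.
-/

theorem Finset.sum_mul_le_sum_mul_max' {α : Type*} [LinearOrder α] {s : Finset α}
    (hs : s.Nonempty) (k f : α → ℕ) (hf : Monotone f) :
    ∑ j ∈ s, k j * f j ≤ (∑ j ∈ s, k j) * f (s.max' hs) := by
  rw [Finset.sum_mul]
  exact Finset.sum_le_sum fun j hj => Nat.mul_le_mul_left _ (hf (s.le_max' j hj))

theorem Nat.cast_sum_mul_two_pow_sub_one {α : Type*} (s : Finset α) (k e : α → ℕ) :
    ((∑ j ∈ s, k j * (2 ^ e j - 1) : ℕ) : ℤ) = (∑ j ∈ s, k j * 2 ^ e j : ℕ) - ∑ j ∈ s, k j := by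
  push_cast [Nat.cast_sub Nat.one_le_two_pow, mul_sub, Finset.sum_sub_distrib]
  simp

theorem eq_and_eq_one_of_sub_eq_sub {R : Type*} [CommRing R] [NoZeroDivisors R] {q A S c : R}
    (hq : q ≠ 1) (h₁ : A - S = c - 1) (h₂ : q * A - S = q * c - 1) : A = c ∧ S = 1 := by
  have hA : A = c := by
    have : (q - 1) * (A - c) = 0 := by linear_combination h₂ - h₁
    simpa [sub_eq_zero, hq] using this
  exact ⟨hA, by linear_combination hA - h₁⟩

theorem stmt_6 (J : Finset ℕ) (hJ : J.Nonempty) (n : ℕ) (hn : J.max' hJ = n)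
    (m : ℕ) (hm : 1 ≤ m) :
    ¬ ∃ k : ℕ → ℕ,
        (∑ j ∈ J, k j * (2 ^ j - 1) = 2 ^ (n + 1) - 1) ∧
        (∑ j ∈ J, k j * (2 ^ (j + m) - 1) = 2 ^ (n + m + 1) - 1) := by
  rintro ⟨k, h₁, h₂⟩
  have hshift : ∑ j ∈ J, k j * 2 ^ (j + m) = 2 ^ m * ∑ j ∈ J, k j * 2 ^ j := by
    rw [Finset.mul_sum]
    exact Finset.sum_congr rfl fun j _ => by ring
  replace h₁ := congrArg (Nat.cast : ℕ → ℤ) h₁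
  replace h₂ := congrArg (Nat.cast : ℕ → ℤ) h₂
  simp only [Nat.cast_sum_mul_two_pow_sub_one, hshift] at h₁ h₂
  push_cast [Nat.cast_sub Nat.one_le_two_pow] at h₁ h₂
  have hq : (2 : ℤ) ^ m ≠ 1 := (one_lt_pow₀ one_lt_two (by omega)).ne'
  obtain ⟨hA, hS⟩ := eq_and_eq_one_of_sub_eq_sub hq h₁ (by rw [h₂]; ring)
  have hle := hn ▸ J.sum_mul_le_sum_mul_max' hJ k _ (pow_right_mono₀ one_le_two)
  zify at hle
  rw [hA, hS, one_mul, pow_succ] at hle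
  linarith [pow_pos (two_pos : (0 : ℤ) < 2) n]
end

section
/- For every n ∈ ℕ, the vector (2^{n+1} − 1, 2^{n+2} − 1) ∈ ℕ² is not an ℕ-linear combination of the vectors (2^j − 1, 2^{j+1} − 1) for 0 ≤ j ≤ n. -/
/-!
Write `mersenne j = 2 ^ j - 1`, so the vectors are `(m, 2 * m + 1)`. The functional `(x, y) ↦ y - 2 x`
takes the value `1` on the target and on every generator, so the coefficients of a combination sum
to `1`. The first coordinate of the combination is then at most `max_{j ≤ n} mersenne j = mersenne n`,
which is smaller than `mersenne (n + 1)`.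
-/

open Finset

theorem sum_eq_one_of_eq_sum_smul_two_mul_add_one {ι : Type*} (s : Finset ι) (k a : ι → ℕ) (m : ℕ)
    (h : ((m, 2 * m + 1) : ℕ × ℕ) = ∑ j ∈ s, k j • ((a j, 2 * a j + 1) : ℕ × ℕ)) :
    ∑ j ∈ s, k j = 1 := by
  have hfst : m = ∑ j ∈ s, k j * a j := by
    simpa only [Prod.fst_sum, Prod.smul_fst, smul_eq_mul] using congrArg Prod.fst h
  have hsnd : 2 * m + 1 = 2 * ∑ j ∈ s, k j * a j + ∑ j ∈ s, k j := by
    rw [mul_sum, ← sum_add_distrib]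
    simpa only [Prod.snd_sum, Prod.smul_snd, smul_eq_mul, mul_add, mul_one, mul_left_comm]
      using congrArg Prod.snd h
  omega

theorem sum_mul_le_of_sum_eq_one {ι : Type*} {s : Finset ι} {k a : ι → ℕ} {b : ℕ}
    (hk : ∑ j ∈ s, k j = 1) (ha : ∀ j ∈ s, a j ≤ b) :
    ∑ j ∈ s, k j * a j ≤ b :=
  calc ∑ j ∈ s, k j * a j ≤ ∑ j ∈ s, k j * b := sum_le_sum fun j hj => by gcongr; exact ha j hj
    _ = b := by rw [← sum_mul, hk, one_mul]

theorem stmt_9 (n : ℕ) :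
    ¬ ∃ k : ℕ → ℕ,
        ((2 ^ (n + 1) - 1, 2 ^ (n + 2) - 1) : ℕ × ℕ) =
          ∑ j ∈ Finset.range (n + 1), k j • ((2 ^ j - 1, 2 ^ (j + 1) - 1) : ℕ × ℕ) := by
  rintro ⟨k, h⟩
  have h' : ((mersenne (n + 1), 2 * mersenne (n + 1) + 1) : ℕ × ℕ) =
      ∑ j ∈ range (n + 1), k j • ((mersenne j, 2 * mersenne j + 1) : ℕ × ℕ) := by
    simp only [← mersenne_succ]
    exact h
  have hk := sum_eq_one_of_eq_sum_smul_two_mul_add_one _ _ _ _ h'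
  have hfst : mersenne (n + 1) = ∑ j ∈ range (n + 1), k j * mersenne j := by
    simpa only [Prod.fst_sum, Prod.smul_fst, smul_eq_mul] using congrArg Prod.fst h'
  have hle : mersenne (n + 1) ≤ mersenne n :=
    hfst ▸ sum_mul_le_of_sum_eq_one hk fun j hj =>
      mersenne_le_mersenne.2 (Nat.lt_succ_iff.1 (mem_range.1 hj))
  exact absurd hle (by simp)
end

section
/- Over the semiring ℕ, the submodule (i.e., sub-commutative-monoid closed under ℕ-scaling) of ℕ^ℕ generated by the shifts of the sequence g(n) = 2ⁿ − 1 is not finitely generated: for every finite set of shifts σ^{j}(g) (j ∈ J, with σ the shift operator), the sequence σ^{max(J)+1}(g) is not an ℕ-linear combination of them. -/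
/-!
An ℕ-combination `∑ c_j σʲ(bⁿ - 1)` takes the value `bⁿ S - T` at `n`, where `S = ∑ c_j bʲ` and
`T = ∑ c_j`. Matching `σᵐ(bⁿ - 1)` at `n = 0` and `n = 1` forces `T = 1` and `S = bᵐ`; but if every
`j` is below `m` then `b S ≤ T bᵐ`, which is impossible. A finitely generated span of all shifts
would lie in the span of finitely many of them, and the next shift escapes it.
-/

open Submodule Set

theorem Submodule.exists_finset_span_image_eq_of_fg {R M ι : Type*} [Semiring R]
    [AddCommMonoid M] [Module R M] {v : ι → M} (h : (span R (range v)).FG) :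
    ∃ J : Finset ι, span R (v '' J) = span R (range v) := by
  classical
  obtain ⟨s, hs, heq⟩ := (fg_span_iff_fg_span_finset_subset _).1 h
  rw [← image_univ] at hs
  obtain ⟨J, -, rfl⟩ := Finset.subset_set_image_iff.1 hs
  exact ⟨J, by rw [heq, Finset.coe_image]⟩

theorem linearCombination_pow_add_sub_one_apply {b : ℕ} (hb : 0 < b) (l : ℕ →₀ ℕ) (n : ℕ) :
    (Finsupp.linearCombination ℕ (fun j n ↦ b ^ (n + j) - 1 : ℕ → ℕ → ℕ) l n : ℤ) =
      b ^ n * (l.sum fun j c ↦ c * b ^ j : ℕ) - (l.sum fun _ c ↦ c : ℕ) := by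
  simp only [Finsupp.linearCombination_apply, Finsupp.sum, Finset.sum_apply, Pi.smul_apply,
    smul_eq_mul, Nat.cast_sum, Nat.cast_mul, Finset.mul_sum, ← Finset.sum_sub_distrib]
  refine Finset.sum_congr rfl fun j _ ↦ ?_
  rw [Nat.cast_sub (Nat.one_le_pow _ _ hb)]
  push_cast
  ring

theorem pow_add_sub_one_notMem_span {b m : ℕ} (hb : 1 < b) {J : Finset ℕ}
    (hJ : ∀ j ∈ J, j < m) :
    (fun n ↦ b ^ (n + m) - 1) ∉ span ℕ ((fun j n ↦ b ^ (n + j) - 1) '' (J : Set ℕ)) := by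
  intro h
  obtain ⟨l, hl, hlm⟩ := (Finsupp.mem_span_image_iff_linearCombination ℕ).1 h
  set S := l.sum fun j c ↦ c * b ^ j
  set T := l.sum fun _ c ↦ c
  have heval (n : ℕ) : (b : ℤ) ^ n * b ^ m - 1 = b ^ n * S - T := by
    rw [← linearCombination_pow_add_sub_one_apply (by omega) l n, hlm,
      Nat.cast_sub (Nat.one_le_pow _ _ (by omega))]
    push_cast
    ring
  have h0 := heval 0
  have h1 := heval 1
  simp only [pow_zero, one_mul, pow_one] at h0 h1
  have hT : T = 1 := by
    have : ((b : ℤ) - 1) * T = (b - 1) * 1 := by linear_combination b * h0 - h1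
    exact_mod_cast mul_left_cancel₀ (by omega : (b : ℤ) - 1 ≠ 0) this
  have hS : S = b ^ m := by
    rw [hT, Nat.cast_one] at h0
    exact_mod_cast (by linarith : (S : ℤ) = b ^ m)
  have hbound : b * S ≤ T * b ^ m := by
    simp only [S, T, Finsupp.sum, Finset.mul_sum, Finset.sum_mul]
    refine Finset.sum_le_sum fun j hj ↦ ?_
    calc b * (l j * b ^ j) = l j * b ^ (j + 1) := by ring
      _ ≤ l j * b ^ m := by gcongr; omega; exact hJ j (hl hj)
  rw [hT, hS, one_mul] at hbound
  have := Nat.pow_lt_pow_succ hb (n := m)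
  rw [pow_succ'] at this
  omega

theorem stmt_15 (g : ℕ → ℕ) (hg : ∀ n, g n = 2 ^ n - 1) :
    ¬ (Submodule.span ℕ (Set.range fun j : ℕ => fun n : ℕ => g (n + j))).FG ∧
      ∀ (J : Finset ℕ) (hJ : J.Nonempty),
        (fun n : ℕ => g (n + (J.max' hJ + 1))) ∉
          Submodule.span ℕ ((fun j : ℕ => fun n : ℕ => g (n + j)) '' (J : Set ℕ)) := by
  obtain rfl : g = fun n ↦ 2 ^ n - 1 := funext hg
  refine ⟨fun hfg ↦ ?_, fun J hJ ↦
    pow_add_sub_one_notMem_span one_lt_two fun j hj ↦ Nat.lt_succ_of_le (J.le_max' j hj)⟩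
  obtain ⟨J, hJ⟩ := exists_finset_span_image_eq_of_fg hfg
  refine pow_add_sub_one_notMem_span one_lt_two (m := J.sup id + 1)
    (fun j hj ↦ Nat.lt_succ_of_le (J.le_sup (f := id) hj)) ?_
  rw [hJ]
  exact subset_span ⟨_, rfl⟩
end

section
/- Let g : ℕ → ℕ be g(n) = 2ⁿ − 1. For any finite J ⊆ ℕ with max n and coefficients k_j ∈ ℕ (j ∈ J), if Σ_{j∈J} k_j · g(j + m) = g(n + 1 + m) holds for m = 0 and some m ≥ 1, then there exists j₁ ∈ J with k_{j₁} = 1, k_j = 0 for j ≠ j₁, and g(j₁) = g(n+1) — contradicting injectivity of g since j₁ ≤ n < n+1. Hence no such coefficients exist. -/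
/-!
Subtracting `2 ^ m` times the representation `∑ k_j (2 ^ j - 1) = 2 ^ a - 1` from its shift
`∑ k_j (2 ^ (j + m) - 1) = 2 ^ (a + m) - 1` leaves `(2 ^ m - 1) ∑ k_j = 2 ^ m - 1`, so the
coefficients sum to `1` and the representation has a single term `2 ^ j₁ - 1 = 2 ^ a - 1`.
Since `a = n + 1` exceeds every exponent in `J`, this contradicts the injectivity of
`j ↦ 2 ^ j - 1`.
-/

open Finset

theorem sum_mul_pow_add_sub_one {R : Type*} [CommRing R] (s : Finset ℕ) (k : ℕ → R) (b : R)
    (m : ℕ) :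
    ∑ j ∈ s, k j * (b ^ (j + m) - 1) =
      b ^ m * ∑ j ∈ s, k j * (b ^ j - 1) + (b ^ m - 1) * ∑ j ∈ s, k j := by
  rw [mul_sum, mul_sum, ← sum_add_distrib]
  exact sum_congr rfl fun j _ => by ring

theorem sum_eq_one_of_repr_pow_sub_one_shift {R : Type*} [CommRing R] [NoZeroDivisors R]
    {s : Finset ℕ} {k : ℕ → R} {b : R} {a m : ℕ} (hbm : b ^ m ≠ 1)
    (h₀ : ∑ j ∈ s, k j * (b ^ j - 1) = b ^ a - 1)
    (hₘ : ∑ j ∈ s, k j * (b ^ (j + m) - 1) = b ^ (a + m) - 1) :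
    ∑ j ∈ s, k j = 1 := by
  rw [sum_mul_pow_add_sub_one, h₀, pow_add] at hₘ
  have hfactor : (b ^ m - 1) * (∑ j ∈ s, k j - 1) = 0 := by linear_combination hₘ
  rcases mul_eq_zero.1 hfactor with h | h
  · exact absurd (sub_eq_zero.1 h) hbm
  · exact sub_eq_zero.1 h

theorem Nat.cast_pow_sub_one {b : ℕ} (hb : 0 < b) (e : ℕ) :
    ((b ^ e - 1 : ℕ) : ℤ) = (b : ℤ) ^ e - 1 := by
  rw [Nat.cast_sub (Nat.one_le_pow _ _ hb)]
  push_cast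
  rfl

theorem Nat.sum_eq_one_of_repr_pow_sub_one_shift {s : Finset ℕ} {k : ℕ → ℕ} {b a m : ℕ}
    (hb : 1 < b) (hm : m ≠ 0)
    (h₀ : ∑ j ∈ s, k j * (b ^ j - 1) = b ^ a - 1)
    (hₘ : ∑ j ∈ s, k j * (b ^ (j + m) - 1) = b ^ (a + m) - 1) :
    ∑ j ∈ s, k j = 1 := by
  have hcast := Nat.cast_pow_sub_one (b := b) (by omega)
  have hbm : (b : ℤ) ^ m ≠ 1 := by exact_mod_cast (Nat.one_lt_pow hm hb).ne'
  have h₀' := congrArg (Nat.cast : ℕ → ℤ) h₀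
  have hₘ' := congrArg (Nat.cast : ℕ → ℤ) hₘ
  push_cast [hcast] at h₀' hₘ'
  exact_mod_cast _root_.sum_eq_one_of_repr_pow_sub_one_shift hbm h₀' hₘ'

theorem Finset.exists_eq_one_of_sum_eq_one {ι : Type*} {s : Finset ι} {k : ι → ℕ}
    (h : ∑ i ∈ s, k i = 1) : ∃ i ∈ s, k i = 1 ∧ ∀ j ∈ s, j ≠ i → k j = 0 := by
  classical
  obtain ⟨i, hi, hki⟩ := exists_ne_zero_of_sum_ne_zero (h.trans_ne one_ne_zero)
  rw [← add_sum_erase s k hi] at h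
  have hrest : ∑ j ∈ s.erase i, k j = 0 := by omega
  refine ⟨i, hi, by omega, fun j hj hji => ?_⟩
  exact sum_eq_zero_iff.1 hrest j (mem_erase.2 ⟨hji, hj⟩)

theorem Nat.two_pow_sub_one_injective : Function.Injective fun n : ℕ => 2 ^ n - 1 := by
  intro a b h
  have := Nat.one_le_two_pow (n := a)
  have := Nat.one_le_two_pow (n := b)
  exact Nat.pow_right_injective le_rfl (show 2 ^ a = 2 ^ b by simp only at h; omega)

theorem stmt_17 (g : ℕ → ℕ) (hg : ∀ n, g n = 2 ^ n - 1)
    (J : Finset ℕ) (hJ : J.Nonempty) (n : ℕ) (hn : J.max' hJ = n) :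
    (∀ (k : ℕ → ℕ) (m : ℕ), 1 ≤ m →
        (∑ j ∈ J, k j * g j = g (n + 1)) →
        (∑ j ∈ J, k j * g (j + m) = g (n + 1 + m)) →
        ∃ j₁ ∈ J, k j₁ = 1 ∧ (∀ j ∈ J, j ≠ j₁ → k j = 0) ∧ g j₁ = g (n + 1)) ∧
    ¬ ∃ (k : ℕ → ℕ) (m : ℕ), 1 ≤ m ∧
        (∑ j ∈ J, k j * g j = g (n + 1)) ∧
        (∑ j ∈ J, k j * g (j + m) = g (n + 1 + m)) := by
  have single_term : ∀ (k : ℕ → ℕ) (m : ℕ), 1 ≤ m →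
      (∑ j ∈ J, k j * g j = g (n + 1)) →
      (∑ j ∈ J, k j * g (j + m) = g (n + 1 + m)) →
      ∃ j₁ ∈ J, k j₁ = 1 ∧ (∀ j ∈ J, j ≠ j₁ → k j = 0) ∧ g j₁ = g (n + 1) := by
    intro k m hm h₀ hₘ
    simp only [hg] at h₀ hₘ
    obtain ⟨j₁, hj₁, hk₁, hk⟩ := exists_eq_one_of_sum_eq_one <|
      Nat.sum_eq_one_of_repr_pow_sub_one_shift one_lt_two (by omega) h₀ hₘ
    refine ⟨j₁, hj₁, hk₁, hk, ?_⟩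
    have hsingle : ∑ j ∈ J, k j * (2 ^ j - 1) = k j₁ * (2 ^ j₁ - 1) :=
      sum_eq_single_of_mem j₁ hj₁ fun j hj hji => by rw [hk j hj hji, zero_mul]
    rwa [hsingle, hk₁, one_mul, ← hg, ← hg] at h₀
  refine ⟨single_term, fun ⟨k, m, hm, h₀, hₘ⟩ => ?_⟩
  obtain ⟨j₁, hj₁, -, -, hg₁⟩ := single_term k m hm h₀ hₘ
  have hj₁n : j₁ ≤ n := hn ▸ J.le_max' j₁ hj₁
  rw [hg, hg] at hg₁
  have := Nat.two_pow_sub_one_injective hg₁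
  omega
end
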